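/- Let Γ₁ ≤ Γ and Λ ≤ Γ be subgroups such that the action of Γ₁ × Λ on Γ given by (g, k)·h = g h k⁻¹ is free (equivalently, g h k = h implies g = k = e). Then there exists a map π : Γ → Λ satisfying π(g h k) = π(h) k for all g ∈ Γ₁, h ∈ Γ, k ∈ Λ, and the associated cocycle ω(g, hΛ) = π(gh)π(h)⁻¹ satisfies ω(g, hΛ) = e for all g ∈ Γ₁ and h ∈ Γ. -/

import Mathlib

/-!
A free action of a group `G` on `X` is, orbit by orbit, a copy of the left regular action, so
choosing a base point in every orbit yields a `G`-equivariant map `X → G`. Applied to the free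
action `(g, k) • h = g * h * k⁻¹` of `Γ₁ × Λ` on `Γ`, the inverse of the `Λ`-coordinate of such a
map is the required `π`: it transforms under `Λ` by right translation and is blind to `Γ₁`, which
is exactly the triviality of the cocycle on `Γ₁`.
-/

namespace MulAction

theorem exists_map_smul_eq_mul_of_isCancelSMul (G X : Type*) [Group G] [MulAction G X]
    [IsCancelSMul G X] : ∃ f : X → G, ∀ (g : G) (x : X), f (g • x) = g * f x := by
  have mem_orbit_out (x : X) : ∃ g : G, g • (⟦x⟧ : orbitRel.Quotient G X).out = x := by
    obtain ⟨g, hg⟩ := Quotient.mk_out (s := orbitRel G X) x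
    exact ⟨g⁻¹, by rw [← hg, inv_smul_smul]⟩
  choose f hf using mem_orbit_out
  refine ⟨f, fun g x ↦ IsCancelSMul.right_cancel _ _ (⟦x⟧ : orbitRel.Quotient G X).out ?_⟩
  have same_orbit : (⟦g • x⟧ : orbitRel.Quotient G X) = ⟦x⟧ := Quotient.sound (mem_orbit x g)
  rw [mul_smul, hf x, ← same_orbit]
  exact hf (g • x)

end MulAction

namespace Subgroup

variable {Γ : Type*} [Group Γ]

abbrev leftRightMulAction (Γ₁ Λ : Subgroup Γ) : MulAction (Γ₁ × Λ) Γ where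
  smul p h := p.1 * h * (p.2 : Γ)⁻¹
  one_smul h := by simp [HSMul.hSMul]
  mul_smul p q h := by simp [HSMul.hSMul, mul_assoc]

end Subgroup

/-- If the left–right action of `Γ₁ × Λ` on `Γ` given by `(g,k)·h = ghk⁻¹` is free,
then there is a map `π : Γ → Λ` with `π(ghk) = π(h)k` for all `g ∈ Γ₁`, `h ∈ Γ`,
`k ∈ Λ`, and the associated cocycle `ω(g, hΛ) = π(gh)π(h)⁻¹` is trivial on `Γ₁`. -/
theorem coinduction_trivial_cocycle_on_free_part {Γ : Type*} [Group Γ]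
    (Γ₁ Λ : Subgroup Γ)
    (hfree : ∀ g ∈ Γ₁, ∀ k ∈ Λ, ∀ h : Γ, g * h * k⁻¹ = h → g = 1 ∧ k = 1) :
    ∃ π : Γ → Γ, (∀ h : Γ, π h ∈ Λ) ∧
      (∀ g ∈ Γ₁, ∀ h : Γ, ∀ k ∈ Λ, π (g * h * k) = π h * k) ∧
      (∀ g ∈ Γ₁, ∀ h : Γ, π (g * h) * (π h)⁻¹ = 1) := by
  let := Γ₁.leftRightMulAction Λ
  have : IsCancelSMul (Γ₁ × Λ) Γ := isCancelSMul_iff_eq_one_of_smul_eq.mpr fun p h hp ↦ by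
    obtain ⟨hg, hk⟩ := hfree _ p.1.2 _ p.2.2 h hp
    exact Prod.ext (Subtype.ext hg) (Subtype.ext hk)
  obtain ⟨f, hf⟩ := MulAction.exists_map_smul_eq_mul_of_isCancelSMul (Γ₁ × Λ) Γ
  have equivariant : ∀ g ∈ Γ₁, ∀ h : Γ, ∀ k ∈ Λ, ((f (g * h * k)).2 : Γ)⁻¹ = ((f h).2 : Γ)⁻¹ * k :=
    fun g hg h k hk ↦ by
      have smul_eq : ((⟨g, hg⟩, ⟨k, hk⟩⁻¹) : Γ₁ × Λ) • h = g * h * k :=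
        show g * h * (k⁻¹)⁻¹ = g * h * k by rw [inv_inv]
      rw [← smul_eq, hf]
      simp
  refine ⟨fun h ↦ ((f h).2 : Γ)⁻¹, fun h ↦ inv_mem (f h).2.2, equivariant, fun g hg h ↦ ?_⟩
  have invariant : (f (g * h)).2 = (f h).2 := by simpa using equivariant g hg h 1 (one_mem Λ)
  simp [invariant]
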